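/- arXiv:2406.08148 — 7 statements merged into one kernel-verified Lean document; each statement's English description precedes it below -/
import Mathlib

section
/- Let C < 0, γ ∈ (0,1), φα, φβ > 0, φα', φβ' ≥ 0 with Dα := φα - γ·φα' ≠ 0 and Dβ := φβ - γ·φβ' ≠ 0. Then the two Bellman solutions θ_{π₁} = (C/Dα, C/φβ + Cγφβ'/(φβ·Dα)) and θ_{π₂} = (C/φα + Cγφα'/(φα·Dβ), C/Dβ) both exist and are distinct (with θ_{π₁}(a₁) > θ_{π₁}(a₂) and θ_{π₂}(a₁) < θ_{π₂}(a₂)) if either (Dα > 0 and Dβ < 0) or (Dα < 0 and Dβ > 0). -/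
/-!
Write `Dα = φα - γ φα'` and `Dβ = φβ - γ φβ'`. The gap between the two components of `θπ₁` is
`(C / φβ) (Dβ / Dα - 1)`, and symmetrically for `θπ₂`. When `Dα` and `Dβ` have opposite signs
`Dβ / Dα - 1 < 0`, and with `C / φβ < 0` the gap is positive; so each solution lies strictly on its
own side of the boundary `θ(a₁) = θ(a₂)`, and the two are therefore distinct.
-/

theorem div_sub_div_add_div_eq_div_mul (C γ φ φ' D : ℝ) (hφ : φ ≠ 0) (hD : D ≠ 0) :
    C / D - (C / φ + C * γ * φ' / (φ * D)) = C / φ * ((φ - γ * φ') / D - 1) := by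
  field_simp
  ring

theorem div_mul_div_sub_one_pos {C φ D E : ℝ} (hC : C < 0) (hφ : 0 < φ) (hDE : D * E < 0) :
    0 < C / φ * (E / D - 1) := by
  have hED : E / D < 0 := by
    rw [div_neg_iff]
    rcases mul_neg_iff.1 hDE with ⟨hD, hE⟩ | ⟨hD, hE⟩
    · exact Or.inr ⟨hE, hD⟩
    · exact Or.inl ⟨hE, hD⟩
  exact mul_pos_of_neg_of_neg (div_neg_of_neg_of_pos hC hφ) (by linarith)

theorem bellman_greedy_gap_pos {C γ φ φ' D : ℝ} (hC : C < 0) (hφ : 0 < φ)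
    (hopp : D * (φ - γ * φ') < 0) :
    0 < C / D - (C / φ + C * γ * φ' / (φ * D)) := by
  rw [div_sub_div_add_div_eq_div_mul C γ φ φ' D hφ.ne' (left_ne_zero_of_mul hopp.ne)]
  exact div_mul_div_sub_one_pos hC hφ hopp

theorem bellman_two_solutions_distinct_general
    (C γ φα φβ φα' φβ' : ℝ)
    (hC : C < 0)
    (hφα : 0 < φα) (hφβ : 0 < φβ)
    (hsign : (0 < φα - γ * φα' ∧ φβ - γ * φβ' < 0) ∨
             (φα - γ * φα' < 0 ∧ 0 < φβ - γ * φβ')) :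
    let θπ₁ : ℝ × ℝ := (C / (φα - γ * φα'),
      C / φβ + C * γ * φβ' / (φβ * (φα - γ * φα')))
    let θπ₂ : ℝ × ℝ := (C / φα + C * γ * φα' / (φα * (φβ - γ * φβ')),
      C / (φβ - γ * φβ'))
    θπ₁.1 > θπ₁.2 ∧ θπ₂.1 < θπ₂.2 ∧ θπ₁ ≠ θπ₂ := by
  intro θπ₁ θπ₂
  have hopp : (φα - γ * φα') * (φβ - γ * φβ') < 0 := mul_neg_iff.2 hsign
  have h₁ : θπ₁.2 < θπ₁.1 := sub_pos.1 (bellman_greedy_gap_pos hC hφβ hopp)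
  have h₂ : θπ₂.1 < θπ₂.2 :=
    sub_pos.1 (bellman_greedy_gap_pos hC hφα (by rwa [mul_comm] at hopp))
  exact ⟨h₁, h₂, fun h => (h ▸ h₁).not_gt h₂⟩

theorem bellman_two_solutions_distinct
    (C γ φα φβ φα' φβ' : ℝ)
    (hC : C < 0) (hγ0 : 0 < γ) (hγ1 : γ < 1)
    (hφα : 0 < φα) (hφβ : 0 < φβ) (hφα' : 0 ≤ φα') (hφβ' : 0 ≤ φβ')
    (hDα : φα - γ * φα' ≠ 0) (hDβ : φβ - γ * φβ' ≠ 0)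
    (hsign : (0 < φα - γ * φα' ∧ φβ - γ * φβ' < 0) ∨
             (φα - γ * φα' < 0 ∧ 0 < φβ - γ * φβ')) :
    let θπ₁ : ℝ × ℝ := (C / (φα - γ * φα'),
      C / φβ + C * γ * φβ' / (φβ * (φα - γ * φα')))
    let θπ₂ : ℝ × ℝ := (C / φα + C * γ * φα' / (φα * (φβ - γ * φβ')),
      C / (φβ - γ * φβ'))
    θπ₁.1 > θπ₁.2 ∧ θπ₂.1 < θπ₂.2 ∧ θπ₁ ≠ θπ₂ :=
  bellman_two_solutions_distinct_general C γ φα φβ φα' φβ' hC hφα hφβ hsign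
end

section
/- Define the residual-gradient force F_res(θ) piecewise: for θ₁ ≥ θ₂, F_res(θ) = (−(φα−γφα')(φα θ₁ − C − γφα' θ₁) + γφβ'(φβ θ₂ − C − γφβ' θ₁), −φβ·(φβ θ₂ − C − γφβ' θ₁))* and for θ₁ ≤ θ₂ the corresponding π₂ expression F^{π₂}_res(θ) = (−φα(φα θ₁ − C − γφα' θ₂), γφα'(φα θ₁ − C − γφα' θ₂) − (φβ−γφβ')(φβ θ₂ − C − γφβ' θ₂)). Then there exists a point θ on the boundary θ₁ = θ₂ where the two branch expressions differ, i.e., F^{π₁}_res(θ) ≠ F^{π₂}_res(θ); hence F_res is discontinuous across the policy boundary for generic parameters (in particular whenever φα' > 0 or φβ' > 0 with C < 0). -/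
/-! At the origin both greedy actions predict the same value, so the two branches differ only through
the bootstrap terms that the exact gradient differentiates: their first components differ by
`-γ C (φα' + φβ')`, which is nonzero as soon as `C ≠ 0`, `γ ≠ 0` and `φα' + φβ' ≠ 0`. -/

theorem residual_gradient_discontinuous_general
    (C γ φα φβ φα' φβ' : ℝ)
    (hC : C < 0) (hγ0 : 0 < γ)
    (hφα' : 0 ≤ φα') (hφβ' : 0 ≤ φβ')
    (hne : 0 < φα' ∨ 0 < φβ') :
    let Fπ₁ : ℝ × ℝ → ℝ × ℝ := fun θ =>
      (-((φα - γ * φα') * (φα * θ.1 - C - γ * φα' * θ.1))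
        + γ * φβ' * (φβ * θ.2 - C - γ * φβ' * θ.1),
       -(φβ * (φβ * θ.2 - C - γ * φβ' * θ.1)))
    let Fπ₂ : ℝ × ℝ → ℝ × ℝ := fun θ =>
      (-(φα * (φα * θ.1 - C - γ * φα' * θ.2)),
       γ * φα' * (φα * θ.1 - C - γ * φα' * θ.2)
        - (φβ - γ * φβ') * (φβ * θ.2 - C - γ * φβ' * θ.2))
    ∃ θ : ℝ × ℝ, θ.1 = θ.2 ∧ Fπ₁ θ ≠ Fπ₂ θ := by
  intro Fπ₁ Fπ₂
  have hφ' : φα' + φβ' ≠ 0 :=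
    (hne.elim (add_pos_of_pos_of_nonneg · hφβ') (add_pos_of_nonneg_of_pos hφα')).ne'
  refine ⟨(0, 0), rfl, fun h => ?_⟩
  have gap : (Fπ₁ (0, 0)).1 - (Fπ₂ (0, 0)).1 = -(γ * C * (φα' + φβ')) := by
    simp only [Fπ₁, Fπ₂]
    ring
  rw [h, sub_self, eq_comm, neg_eq_zero] at gap
  exact mul_ne_zero (mul_ne_zero hγ0.ne' hC.ne) hφ' gap

theorem residual_gradient_discontinuous
    (C γ φα φβ φα' φβ' : ℝ)
    (hC : C < 0) (hγ0 : 0 < γ) (hγ1 : γ < 1)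
    (hφα : 0 < φα) (hφβ : 0 < φβ) (hφα' : 0 ≤ φα') (hφβ' : 0 ≤ φβ')
    (hne : 0 < φα' ∨ 0 < φβ') :
    let Fπ₁ : ℝ × ℝ → ℝ × ℝ := fun θ =>
      (-((φα - γ * φα') * (φα * θ.1 - C - γ * φα' * θ.1))
        + γ * φβ' * (φβ * θ.2 - C - γ * φβ' * θ.1),
       -(φβ * (φβ * θ.2 - C - γ * φβ' * θ.1)))
    let Fπ₂ : ℝ × ℝ → ℝ × ℝ := fun θ =>
      (-(φα * (φα * θ.1 - C - γ * φα' * θ.2)),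
       γ * φα' * (φα * θ.1 - C - γ * φα' * θ.2)
        - (φβ - γ * φβ') * (φβ * θ.2 - C - γ * φβ' * θ.2))
    ∃ θ : ℝ × ℝ, θ.1 = θ.2 ∧ Fπ₁ θ ≠ Fπ₂ θ :=
  residual_gradient_discontinuous_general C γ φα φβ φα' φβ' hC hγ0 hφα' hφβ' hne
end

section
/- Assume φα = φβ =: φ > 0, C < 0, γ ∈ (0,1), φα', φβ' ≥ 0, Dα = φ − γφα' > 0, Dβ = φ − γφβ' < 0. Let θ_{π₁}, θ_{π₂} be the two Bellman solutions and let θ lie strictly between them on the open segment Ω = {λθ_{π₁} + (1−λ)θ_{π₂} : λ ∈ (0,1)} with θ on the π₂ side (θ(a₂) ≥ θ(a₁)). Then the semi-gradient force F^{π₂}_semi(θ) is a positive scalar multiple of the direction θ_{π₁} − θ_{π₂}. -/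
/-!
The semi-gradient field is affine, `F θ = -φ • (M θ - (C, C))`, with `M` the linear part of the
Bellman residual under `π₂`. Since `θ_{π₂}` is a zero of `F`, on the segment
`θ - θ_{π₂} = λ • (θ_{π₁} - θ_{π₂})` we get `F θ = -φ λ • M (θ_{π₁} - θ_{π₂})`. Subtracting the two
Bellman systems shows `θ_{π₁} - θ_{π₂}` is parallel to `(φα', φβ')`, an eigenvector of `M` for the
eigenvalue `Dβ = φ - γ φβ' < 0`; hence `F θ = -φ λ Dβ • (θ_{π₁} - θ_{π₂})` with `-φ λ Dβ > 0`.
-/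

namespace SemiGradient

variable (C γ φ φα' φβ' : ℝ)

def residualMap : ℝ × ℝ →ₗ[ℝ] ℝ × ℝ where
  toFun v := (φ * v.1 - γ * φα' * v.2, (φ - γ * φβ') * v.2)
  map_add' v w := by
    simp only [Prod.fst_add, Prod.snd_add, Prod.mk_add_mk, Prod.mk.injEq]
    constructor <;> ring
  map_smul' a v := by
    simp only [Prod.smul_fst, Prod.smul_snd, smul_eq_mul, RingHom.id_apply, Prod.smul_mk,
      Prod.mk.injEq]
    constructor <;> ring

def force (θ : ℝ × ℝ) : ℝ × ℝ :=
  (-(φ * (φ * θ.1 - C - γ * φα' * θ.2)), -(φ * (φ * θ.2 - C - γ * φβ' * θ.2)))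

noncomputable def thetaPi1 : ℝ × ℝ :=
  (C / (φ - γ * φα'), C / φ + C * γ * φβ' / (φ * (φ - γ * φα')))

noncomputable def thetaPi2 : ℝ × ℝ :=
  (C / φ + C * γ * φα' / (φ * (φ - γ * φβ')), C / (φ - γ * φβ'))

theorem force_eq (θ : ℝ × ℝ) :
    force C γ φ φα' φβ' θ = -φ • (residualMap γ φ φα' φβ' θ - (C, C)) := by
  simp only [force, residualMap, LinearMap.coe_mk, AddHom.coe_mk, Prod.mk_sub_mk, Prod.smul_mk,
    smul_eq_mul, Prod.mk.injEq]
  constructor <;> ring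

theorem residualMap_eigenvector :
    residualMap γ φ φα' φβ' (φα', φβ') = (φ - γ * φβ') • (φα', φβ') := by
  simp only [residualMap, LinearMap.coe_mk, AddHom.coe_mk, Prod.smul_mk, smul_eq_mul,
    Prod.mk.injEq, and_true]
  ring

variable {C γ φ φα' φβ'}

theorem residualMap_thetaPi2 (hφ : φ ≠ 0) (hDβ : φ - γ * φβ' ≠ 0) :
    residualMap γ φ φα' φβ' (thetaPi2 C γ φ φα' φβ') = (C, C) := by
  simp only [residualMap, thetaPi2, LinearMap.coe_mk, AddHom.coe_mk, Prod.mk.injEq]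
  exact ⟨by field_simp; ring, by field_simp⟩

theorem force_eq_of_sub_thetaPi2 (hφ : φ ≠ 0) (hDβ : φ - γ * φβ' ≠ 0) (θ : ℝ × ℝ) :
    force C γ φ φα' φβ' θ = -φ • residualMap γ φ φα' φβ' (θ - thetaPi2 C γ φ φα' φβ') := by
  rw [force_eq, map_sub, residualMap_thetaPi2 hφ hDβ]

theorem thetaPi1_sub_thetaPi2 (hφ : φ ≠ 0) (hDα : φ - γ * φα' ≠ 0) (hDβ : φ - γ * φβ' ≠ 0) :
    thetaPi1 C γ φ φα' φβ' - thetaPi2 C γ φ φα' φβ'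
      = (γ / φ * (C / (φ - γ * φα') - C / (φ - γ * φβ'))) • (φα', φβ') := by
  simp only [thetaPi1, thetaPi2, Prod.mk_sub_mk, Prod.smul_mk, smul_eq_mul, Prod.mk.injEq]
  constructor <;> (field_simp; ring)

theorem residualMap_thetaPi1_sub_thetaPi2 (hφ : φ ≠ 0) (hDα : φ - γ * φα' ≠ 0)
    (hDβ : φ - γ * φβ' ≠ 0) :
    residualMap γ φ φα' φβ' (thetaPi1 C γ φ φα' φβ' - thetaPi2 C γ φ φα' φβ')
      = (φ - γ * φβ') • (thetaPi1 C γ φ φα' φβ' - thetaPi2 C γ φ φα' φβ') := by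
  rw [thetaPi1_sub_thetaPi2 hφ hDα hDβ, map_smul, residualMap_eigenvector, smul_comm]

theorem force_of_mem_segment (hφ : φ ≠ 0) (hDα : φ - γ * φα' ≠ 0) (hDβ : φ - γ * φβ' ≠ 0)
    (lam : ℝ) :
    force C γ φ φα' φβ'
        (lam • thetaPi1 C γ φ φα' φβ' + (1 - lam) • thetaPi2 C γ φ φα' φβ')
      = (-φ * lam * (φ - γ * φβ')) • (thetaPi1 C γ φ φα' φβ' - thetaPi2 C γ φ φα' φβ') := by
  have hsub : lam • thetaPi1 C γ φ φα' φβ' + (1 - lam) • thetaPi2 C γ φ φα' φβ'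
      - thetaPi2 C γ φ φα' φβ' = lam • (thetaPi1 C γ φ φα' φβ' - thetaPi2 C γ φ φα' φβ') := by
    module
  rw [force_eq_of_sub_thetaPi2 hφ hDβ, hsub, map_smul,
    residualMap_thetaPi1_sub_thetaPi2 hφ hDα hDβ, smul_smul, smul_smul]

end SemiGradient

open SemiGradient in
theorem semi_gradient_points_toward_pi1_on_pi2_side_general
    (C γ φ φα' φβ' : ℝ)
    (hφ : 0 < φ)
    (hDα : 0 < φ - γ * φα') (hDβ : φ - γ * φβ' < 0)
    (θ : ℝ × ℝ) (lam : ℝ) (hlam0 : 0 < lam)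
    (hθ : θ = lam • ((C / (φ - γ * φα'),
        C / φ + C * γ * φβ' / (φ * (φ - γ * φα'))) : ℝ × ℝ)
      + (1 - lam) • ((C / φ + C * γ * φα' / (φ * (φ - γ * φβ')),
        C / (φ - γ * φβ')) : ℝ × ℝ)) :
    ∃ c : ℝ, 0 < c ∧
      ((-(φ * (φ * θ.1 - C - γ * φα' * θ.2)),
        -(φ * (φ * θ.2 - C - γ * φβ' * θ.2))) : ℝ × ℝ)
      = c • (((C / (φ - γ * φα'),
          C / φ + C * γ * φβ' / (φ * (φ - γ * φα'))) : ℝ × ℝ)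
        - ((C / φ + C * γ * φα' / (φ * (φ - γ * φβ')),
          C / (φ - γ * φβ')) : ℝ × ℝ)) := by
  refine ⟨-φ * lam * (φ - γ * φβ'), ?_, ?_⟩
  · nlinarith [mul_pos hφ hlam0]
  · subst hθ
    exact force_of_mem_segment hφ.ne' hDα.ne' hDβ.ne lam

theorem semi_gradient_points_toward_pi1_on_pi2_side
    (C γ φ φα' φβ' : ℝ)
    (hC : C < 0) (hγ0 : 0 < γ) (hγ1 : γ < 1)
    (hφ : 0 < φ) (hφα' : 0 ≤ φα') (hφβ' : 0 ≤ φβ')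
    (hDα : 0 < φ - γ * φα') (hDβ : φ - γ * φβ' < 0)
    (θ : ℝ × ℝ) (lam : ℝ) (hlam0 : 0 < lam) (hlam1 : lam < 1)
    (hθ : θ = lam • ((C / (φ - γ * φα'),
        C / φ + C * γ * φβ' / (φ * (φ - γ * φα'))) : ℝ × ℝ)
      + (1 - lam) • ((C / φ + C * γ * φα' / (φ * (φ - γ * φβ')),
        C / (φ - γ * φβ')) : ℝ × ℝ))
    (hside : θ.2 ≥ θ.1) :
    ∃ c : ℝ, 0 < c ∧
      ((-(φ * (φ * θ.1 - C - γ * φα' * θ.2)),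
        -(φ * (φ * θ.2 - C - γ * φβ' * θ.2))) : ℝ × ℝ)
      = c • (((C / (φ - γ * φα'),
          C / φ + C * γ * φβ' / (φ * (φ - γ * φα'))) : ℝ × ℝ)
        - ((C / φ + C * γ * φα' / (φ * (φ - γ * φβ')),
          C / (φ - γ * φβ')) : ℝ × ℝ)) :=
  semi_gradient_points_toward_pi1_on_pi2_side_general C γ φ φα' φβ' hφ hDα hDβ θ lam hlam0 hθ
end

section
/- Assume φα = φβ =: φ > 0, C < 0, γ ∈ (0,1), φα', φβ' ≥ 0, Dα = φ − γφα' > 0, Dβ = φ − γφβ' < 0. Let θ lie on the open segment between θ_{π₁} and θ_{π₂} with θ on the π₁ side (θ(a₁) ≥ θ(a₂)). Then F^{π₁}_semi(θ) is a positive scalar multiple of θ_{π₁} − θ_{π₂}, where F^{π₁}_semi(θ) = (−φ(φθ₁ − C − γφα'θ₁), −φ(φθ₂ − C − γφβ'θ₁)). -/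
/-!
Write `Dα = φ - γφα'`. The semi-gradient `F` is affine with linear part `-φ A`, where
`A = [[Dα, 0], [-γφβ', φ]]`, and it vanishes at the Bellman solution `θ_{π₁}`. The difference
`θ_{π₁} - θ_{π₂}` is a multiple of `(φα', φβ')`, an eigenvector of `A` for the eigenvalue `Dα`.
Hence at `θ = θ_{π₁} - (1 - λ)(θ_{π₁} - θ_{π₂})` we get `F θ = (1 - λ) φ Dα (θ_{π₁} - θ_{π₂})`.
-/

namespace SemiGradient

variable (C γ φ φα' φβ' : ℝ)

def semiGradientPi1 (θ : ℝ × ℝ) : ℝ × ℝ :=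
  (-(φ * (φ * θ.1 - C - γ * φα' * θ.1)), -(φ * (φ * θ.2 - C - γ * φβ' * θ.1)))

noncomputable def valuePi1 : ℝ × ℝ :=
  (C / (φ - γ * φα'), C / φ + C * γ * φβ' / (φ * (φ - γ * φα')))

noncomputable def valuePi2 : ℝ × ℝ :=
  (C / φ + C * γ * φα' / (φ * (φ - γ * φβ')), C / (φ - γ * φβ'))

theorem semiGradientPi1_valuePi1 (hφ : φ ≠ 0) (hDα : φ - γ * φα' ≠ 0) :
    semiGradientPi1 C γ φ φα' φβ' (valuePi1 C γ φ φα' φβ') = 0 := by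
  simp only [semiGradientPi1, valuePi1, Prod.mk_eq_zero]
  constructor <;> · field_simp; ring

theorem semiGradientPi1_add_smul_eigenvector (θ : ℝ × ℝ) (t : ℝ) :
    semiGradientPi1 C γ φ φα' φβ' (θ + t • (φα', φβ')) =
      semiGradientPi1 C γ φ φα' φβ' θ - (t * φ * (φ - γ * φα')) • (φα', φβ') := by
  simp only [semiGradientPi1, Prod.smul_mk, Prod.fst_add, Prod.snd_add, smul_eq_mul,
    Prod.mk_sub_mk, Prod.mk.injEq]
  constructor <;> ring

theorem valuePi1_sub_valuePi2 (hφ : φ ≠ 0) (hDα : φ - γ * φα' ≠ 0) (hDβ : φ - γ * φβ' ≠ 0) :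
    valuePi1 C γ φ φα' φβ' - valuePi2 C γ φ φα' φβ' =
      (C * γ * ((φ - γ * φβ') - (φ - γ * φα')) / (φ * (φ - γ * φα') * (φ - γ * φβ'))) •
        (φα', φβ') := by
  simp only [valuePi1, valuePi2, Prod.mk_sub_mk, Prod.smul_mk, smul_eq_mul, Prod.mk.injEq]
  constructor <;> · field_simp; ring

theorem semiGradientPi1_smul_add_one_sub_smul (hφ : φ ≠ 0) (hDα : φ - γ * φα' ≠ 0) (hDβ : φ - γ * φβ' ≠ 0)
    (lam : ℝ) :
    semiGradientPi1 C γ φ φα' φβ'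
        (lam • valuePi1 C γ φ φα' φβ' + (1 - lam) • valuePi2 C γ φ φα' φβ') =
      ((1 - lam) * φ * (φ - γ * φα')) • (valuePi1 C γ φ φα' φβ' - valuePi2 C γ φ φα' φβ') := by
  have hθ : lam • valuePi1 C γ φ φα' φβ' + (1 - lam) • valuePi2 C γ φ φα' φβ' =
      valuePi1 C γ φ φα' φβ' +
        (-(1 - lam)) • (valuePi1 C γ φ φα' φβ' - valuePi2 C γ φ φα' φβ') := by
    module
  rw [hθ, valuePi1_sub_valuePi2 C γ φ φα' φβ' hφ hDα hDβ, smul_smul,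
    semiGradientPi1_add_smul_eigenvector, semiGradientPi1_valuePi1 C γ φ φα' φβ' hφ hDα]
  module

end SemiGradient

open SemiGradient in
theorem semi_gradient_points_toward_pi1_on_pi1_side_general
    (C γ φ φα' φβ' : ℝ)
    (hφ : 0 < φ)
    (hDα : 0 < φ - γ * φα') (hDβ : φ - γ * φβ' < 0)
    (θ : ℝ × ℝ) (lam : ℝ) (hlam1 : lam < 1)
    (hθ : θ = lam • ((C / (φ - γ * φα'),
        C / φ + C * γ * φβ' / (φ * (φ - γ * φα'))) : ℝ × ℝ)
      + (1 - lam) • ((C / φ + C * γ * φα' / (φ * (φ - γ * φβ')),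
        C / (φ - γ * φβ')) : ℝ × ℝ)) :
    ∃ c : ℝ, 0 < c ∧
      ((-(φ * (φ * θ.1 - C - γ * φα' * θ.1)),
        -(φ * (φ * θ.2 - C - γ * φβ' * θ.1))) : ℝ × ℝ)
      = c • (((C / (φ - γ * φα'),
          C / φ + C * γ * φβ' / (φ * (φ - γ * φα'))) : ℝ × ℝ)
        - ((C / φ + C * γ * φα' / (φ * (φ - γ * φβ')),
          C / (φ - γ * φβ')) : ℝ × ℝ)) := by
  subst hθ
  exact ⟨(1 - lam) * φ * (φ - γ * φα'), by have := sub_pos.2 hlam1; positivity,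
    semiGradientPi1_smul_add_one_sub_smul C γ φ φα' φβ' hφ.ne' hDα.ne' hDβ.ne lam⟩

theorem semi_gradient_points_toward_pi1_on_pi1_side
    (C γ φ φα' φβ' : ℝ)
    (hC : C < 0) (hγ0 : 0 < γ) (hγ1 : γ < 1)
    (hφ : 0 < φ) (hφα' : 0 ≤ φα') (hφβ' : 0 ≤ φβ')
    (hDα : 0 < φ - γ * φα') (hDβ : φ - γ * φβ' < 0)
    (θ : ℝ × ℝ) (lam : ℝ) (hlam0 : 0 < lam) (hlam1 : lam < 1)
    (hθ : θ = lam • ((C / (φ - γ * φα'),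
        C / φ + C * γ * φβ' / (φ * (φ - γ * φα'))) : ℝ × ℝ)
      + (1 - lam) • ((C / φ + C * γ * φα' / (φ * (φ - γ * φβ')),
        C / (φ - γ * φβ')) : ℝ × ℝ))
    (hside : θ.1 ≥ θ.2) :
    ∃ c : ℝ, 0 < c ∧
      ((-(φ * (φ * θ.1 - C - γ * φα' * θ.1)),
        -(φ * (φ * θ.2 - C - γ * φβ' * θ.1))) : ℝ × ℝ)
      = c • (((C / (φ - γ * φα'),
          C / φ + C * γ * φβ' / (φ * (φ - γ * φα'))) : ℝ × ℝ)
        - ((C / φ + C * γ * φα' / (φ * (φ - γ * φβ')),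
          C / (φ - γ * φβ')) : ℝ × ℝ)) :=
  semi_gradient_points_toward_pi1_on_pi1_side_general C γ φ φα' φβ' hφ hDα hDβ θ lam hlam1 hθ
end

section
/- Assume φα = φβ =: φ > 0, C < 0, γ ∈ (0,1), φα', φβ' ≥ 0, with Dα = φ − γφα' < 0 and Dβ = φ − γφβ' > 0. Let θ lie on the open segment between θ_{π₁} and θ_{π₂} (on either side of the boundary, using the matching branch F^{π₁}_semi when θ(a₁) ≥ θ(a₂) and F^{π₂}_semi when θ(a₂) ≥ θ(a₁)). Then the semi-gradient force at θ is a positive scalar multiple of θ_{π₂} − θ_{π₁}. -/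
/-!
Both branches of the semi-gradient force are affine, and the part of the linear map that
depends on the greedy action is `θ ↦ γ θ(aᵢ) w` with `w = (φα', φβ')` the next-state feature.
Moving a point by `s • γw` therefore changes the `πᵢ`-force by `-φ s (φ - γ wᵢ) • γw`. The fixed
points `θ_{π₁}`, `θ_{π₂}` of the two branches differ by a multiple of `γw`, so on the segment the
`π₁`-force is `-φ (1 - λ) Dα • (θ_{π₂} - θ_{π₁})` and the `π₂`-force is
`φ λ Dβ • (θ_{π₂} - θ_{π₁})`; the signs of `Dα` and `Dβ` make both coefficients positive.
-/

/-- `q` stands for `θ(aᵢ)` of the greedy action `aᵢ`: the branch `F^{πᵢ}_semi` is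
`semiGradForce C γ φ φα' φβ' θ.i θ`. -/
def semiGradForce (C γ φ φα' φβ' q : ℝ) (θ : ℝ × ℝ) : ℝ × ℝ :=
  (-(φ * (φ * θ.1 - C - γ * φα' * q)), -(φ * (φ * θ.2 - C - γ * φβ' * q)))

noncomputable def thetaPi1 (C γ φ φα' φβ' : ℝ) : ℝ × ℝ :=
  (C / (φ - γ * φα'), C / φ + C * γ * φβ' / (φ * (φ - γ * φα')))

noncomputable def thetaPi2 (C γ φ φα' φβ' : ℝ) : ℝ × ℝ :=
  (C / φ + C * γ * φα' / (φ * (φ - γ * φβ')), C / (φ - γ * φβ'))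

section

variable {C γ φ φα' φβ' : ℝ}

theorem semiGradForce_add_smul (q r s : ℝ) (θ : ℝ × ℝ) :
    semiGradForce C γ φ φα' φβ' (q + s * r) (θ + s • (γ * φα', γ * φβ')) =
      semiGradForce C γ φ φα' φβ' q θ + (-(φ * s * (φ - r))) • (γ * φα', γ * φβ') := by
  ext <;> simp only [semiGradForce, Prod.fst_add, Prod.snd_add, Prod.smul_fst, Prod.smul_snd,
    smul_eq_mul] <;> ring

theorem semiGradForce_thetaPi1 (hφ : φ ≠ 0) (hDα : φ - γ * φα' ≠ 0) :
    semiGradForce C γ φ φα' φβ' (thetaPi1 C γ φ φα' φβ').1 (thetaPi1 C γ φ φα' φβ') = 0 := by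
  ext <;> simp only [semiGradForce, thetaPi1, Prod.fst_zero, Prod.snd_zero] <;>
    field_simp <;> ring

theorem semiGradForce_thetaPi2 (hφ : φ ≠ 0) (hDβ : φ - γ * φβ' ≠ 0) :
    semiGradForce C γ φ φα' φβ' (thetaPi2 C γ φ φα' φβ').2 (thetaPi2 C γ φ φα' φβ') = 0 := by
  ext <;> simp only [semiGradForce, thetaPi2, Prod.fst_zero, Prod.snd_zero] <;>
    field_simp <;> ring

theorem thetaPi2_sub_thetaPi1 (hφ : φ ≠ 0) (hDα : φ - γ * φα' ≠ 0) (hDβ : φ - γ * φβ' ≠ 0) :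
    thetaPi2 C γ φ φα' φβ' - thetaPi1 C γ φ φα' φβ' =
      (C * γ * (φβ' - φα') / (φ * (φ - γ * φα') * (φ - γ * φβ'))) • (γ * φα', γ * φβ') := by
  ext <;> simp only [thetaPi1, thetaPi2, Prod.fst_sub, Prod.snd_sub, Prod.smul_fst,
    Prod.smul_snd, smul_eq_mul] <;> field_simp <;> ring

end

theorem semi_gradient_points_toward_pi2_general
    (C γ φ φα' φβ' : ℝ)
    (hφ : 0 < φ)
    (hDα : φ - γ * φα' < 0) (hDβ : 0 < φ - γ * φβ')
    (θ : ℝ × ℝ) (lam : ℝ) (hlam0 : 0 < lam) (hlam1 : lam < 1)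
    (hθ : θ = lam • ((C / (φ - γ * φα'),
        C / φ + C * γ * φβ' / (φ * (φ - γ * φα'))) : ℝ × ℝ)
      + (1 - lam) • ((C / φ + C * γ * φα' / (φ * (φ - γ * φβ')),
        C / (φ - γ * φβ')) : ℝ × ℝ)) :
    let θπ₁ : ℝ × ℝ := (C / (φ - γ * φα'),
      C / φ + C * γ * φβ' / (φ * (φ - γ * φα')))
    let θπ₂ : ℝ × ℝ := (C / φ + C * γ * φα' / (φ * (φ - γ * φβ')),
      C / (φ - γ * φβ'))
    (θ.1 ≥ θ.2 → ∃ c : ℝ, 0 < c ∧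
      ((-(φ * (φ * θ.1 - C - γ * φα' * θ.1)),
        -(φ * (φ * θ.2 - C - γ * φβ' * θ.1))) : ℝ × ℝ) = c • (θπ₂ - θπ₁)) ∧
    (θ.2 ≥ θ.1 → ∃ c : ℝ, 0 < c ∧
      ((-(φ * (φ * θ.1 - C - γ * φα' * θ.2)),
        -(φ * (φ * θ.2 - C - γ * φβ' * θ.2))) : ℝ × ℝ) = c • (θπ₂ - θπ₁)) := by
  change θ = lam • thetaPi1 C γ φ φα' φβ' + (1 - lam) • thetaPi2 C γ φ φα' φβ' at hθ
  show (θ.1 ≥ θ.2 → ∃ c : ℝ, 0 < c ∧ semiGradForce C γ φ φα' φβ' θ.1 θ =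
      c • (thetaPi2 C γ φ φα' φβ' - thetaPi1 C γ φ φα' φβ')) ∧
    (θ.2 ≥ θ.1 → ∃ c : ℝ, 0 < c ∧ semiGradForce C γ φ φα' φβ' θ.2 θ =
      c • (thetaPi2 C γ φ φα' φβ' - thetaPi1 C γ φ φα' φβ'))
  set θπ₁ := thetaPi1 C γ φ φα' φβ'
  set θπ₂ := thetaPi2 C γ φ φα' φβ'
  set κ := C * γ * (φβ' - φα') / (φ * (φ - γ * φα') * (φ - γ * φβ'))
  have hd : θπ₂ - θπ₁ = κ • (γ * φα', γ * φβ') := thetaPi2_sub_thetaPi1 hφ.ne' hDα.ne hDβ.ne'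
  have hθ₁ : θ = θπ₁ + ((1 - lam) * κ) • (γ * φα', γ * φβ') := by
    rw [hθ, mul_smul, ← hd]; module
  have hθ₂ : θ = θπ₂ + (-(lam * κ)) • (γ * φα', γ * φβ') := by
    rw [hθ, neg_smul, mul_smul, ← hd]; module
  refine ⟨fun _ => ⟨φ * (1 - lam) * -(φ - γ * φα'),
    mul_pos (mul_pos hφ (sub_pos.2 hlam1)) (neg_pos.2 hDα), ?_⟩,
    fun _ => ⟨φ * lam * (φ - γ * φβ'), by positivity, ?_⟩⟩
  · rw [hθ₁, hd, smul_smul, Prod.fst_add, Prod.smul_fst, smul_eq_mul, semiGradForce_add_smul, semiGradForce_thetaPi1 hφ.ne' hDα.ne, zero_add]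
    congr 1; ring
  · rw [hθ₂, hd, smul_smul, Prod.snd_add, Prod.smul_snd, smul_eq_mul, semiGradForce_add_smul, semiGradForce_thetaPi2 hφ.ne' hDβ.ne', zero_add]
    congr 1; ring

theorem semi_gradient_points_toward_pi2
    (C γ φ φα' φβ' : ℝ)
    (hC : C < 0) (hγ0 : 0 < γ) (hγ1 : γ < 1)
    (hφ : 0 < φ) (hφα' : 0 ≤ φα') (hφβ' : 0 ≤ φβ')
    (hDα : φ - γ * φα' < 0) (hDβ : 0 < φ - γ * φβ')
    (θ : ℝ × ℝ) (lam : ℝ) (hlam0 : 0 < lam) (hlam1 : lam < 1)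
    (hθ : θ = lam • ((C / (φ - γ * φα'),
        C / φ + C * γ * φβ' / (φ * (φ - γ * φα'))) : ℝ × ℝ)
      + (1 - lam) • ((C / φ + C * γ * φα' / (φ * (φ - γ * φβ')),
        C / (φ - γ * φβ')) : ℝ × ℝ)) :
    let θπ₁ : ℝ × ℝ := (C / (φ - γ * φα'),
      C / φ + C * γ * φβ' / (φ * (φ - γ * φα')))
    let θπ₂ : ℝ × ℝ := (C / φ + C * γ * φα' / (φ * (φ - γ * φβ')),
      C / (φ - γ * φβ'))
    (θ.1 ≥ θ.2 → ∃ c : ℝ, 0 < c ∧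
      ((-(φ * (φ * θ.1 - C - γ * φα' * θ.1)),
        -(φ * (φ * θ.2 - C - γ * φβ' * θ.1))) : ℝ × ℝ) = c • (θπ₂ - θπ₁)) ∧
    (θ.2 ≥ θ.1 → ∃ c : ℝ, 0 < c ∧
      ((-(φ * (φ * θ.1 - C - γ * φα' * θ.2)),
        -(φ * (φ * θ.2 - C - γ * φβ' * θ.2))) : ℝ × ℝ) = c • (θπ₂ - θπ₁)) :=
  semi_gradient_points_toward_pi2_general C γ φ φα' φβ' hφ hDα hDβ θ lam hlam0 hlam1 hθ
end

section
/- With φα = φβ = φ > 0, γ ∈ (0,1), φα', φβ' ≥ 0, the matrix A₁ = [[−φ(φ−γφα'), 0], [γφφβ', −φ²]] governing the π₁-branch semi-gradient dynamics has eigenvalues −φ(φ−γφα') and −φ². Hence if Dα = φ − γφα' > 0, both eigenvalues are negative and the π₁ Bellman solution θ_{π₁} is a linearly stable equilibrium of the semi-gradient flow θ' = A₁θ + b; if Dα < 0, A₁ has a positive eigenvalue and θ_{π₁} is unstable. -/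
/-! A triangular matrix has characteristic polynomial `∏ i, (X - C (M i i))`, so its diagonal
entries are eigenvalues; for `A₁` their signs are those of `-(φ - γ φα')` and `-1`, as `φ > 0`. -/

open Polynomial

namespace Matrix

theorem hasEigenvalue_toLin'_diag_of_isLowerTriangular {R n : Type*} [CommRing R] [IsDomain R]
    [Fintype n] [DecidableEq n] [LinearOrder n] {M : Matrix n n R}
    (hM : M.IsLowerTriangular) (i : n) :
    Module.End.HasEigenvalue (toLin' M) (M i i) := by
  have hcharpoly : M.charpoly = ∏ j : n, (X - C (M j j)) := by
    rw [← charpoly_transpose M, charpoly_of_isUpperTriangular Mᵀ hM.transpose]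
    rfl
  rw [Module.End.hasEigenvalue_iff_isRoot_charpoly, charpoly_toLin', hcharpoly,
    IsRoot, eval_prod]
  exact Finset.prod_eq_zero (Finset.mem_univ i) (by simp)

theorem isLowerTriangular_of_fin_two {R : Type*} [Zero R] (a c d : R) :
    !![a, 0; c, d].IsLowerTriangular := by
  intro i j hij
  rw [OrderDual.toDual_lt_toDual] at hij
  fin_cases i <;> fin_cases j <;> simp_all

end Matrix

theorem pi1_branch_eigenvalues_and_stability_general
    (C γ φ φα' φβ' : ℝ)
    (hφ : 0 < φ) :
    let A₁ : Matrix (Fin 2) (Fin 2) ℝ :=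
      !![-(φ * (φ - γ * φα')), 0; γ * φ * φβ', -(φ ^ 2)]
    Module.End.HasEigenvalue (Matrix.toLin' A₁) (-(φ * (φ - γ * φα'))) ∧
    Module.End.HasEigenvalue (Matrix.toLin' A₁) (-(φ ^ 2)) ∧
    (0 < φ - γ * φα' →
      (-(φ * (φ - γ * φα')) < 0 ∧ -(φ ^ 2) < (0 : ℝ)) ∧
      Matrix.mulVec A₁ ![C / (φ - γ * φα'),
        C / φ + C * γ * φβ' / (φ * (φ - γ * φα'))] + ![φ * C, φ * C] = 0) ∧
    (φ - γ * φα' < 0 →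
      ∃ e : ℝ, 0 < e ∧ Module.End.HasEigenvalue (Matrix.toLin' A₁) e) := by
  intro A₁
  have hA₁ : A₁.IsLowerTriangular := Matrix.isLowerTriangular_of_fin_two _ _ _
  have hα : Module.End.HasEigenvalue (Matrix.toLin' A₁) (-(φ * (φ - γ * φα'))) :=
    Matrix.hasEigenvalue_toLin'_diag_of_isLowerTriangular hA₁ 0
  have hβ : Module.End.HasEigenvalue (Matrix.toLin' A₁) (-(φ ^ 2)) :=
    Matrix.hasEigenvalue_toLin'_diag_of_isLowerTriangular hA₁ 1
  refine ⟨hα, hβ, fun hD => ⟨⟨?_, ?_⟩, ?_⟩, fun hD => ⟨_, ?_, hα⟩⟩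
  · exact neg_neg_of_pos (mul_pos hφ hD)
  · exact neg_neg_of_pos (pow_pos hφ 2)
  · have hφ₀ : φ ≠ 0 := hφ.ne'
    have hD₀ : φ - γ * φα' ≠ 0 := hD.ne'
    ext i
    fin_cases i <;>
      simp only [A₁, Fin.zero_eta, Fin.mk_one, Matrix.mulVec_cons, Matrix.mulVec_empty,
        Pi.add_apply, Pi.smul_apply, Pi.zero_apply, Function.comp_apply, Matrix.cons_val_zero,
        Matrix.cons_val_one, Matrix.cons_val_fin_one, Matrix.head_cons, Matrix.tail_cons,
        smul_eq_mul, add_zero] <;>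
      field_simp <;>
      ring
  · exact neg_pos.2 (mul_neg_of_pos_of_neg hφ hD)

theorem pi1_branch_eigenvalues_and_stability
    (C γ φ φα' φβ' : ℝ)
    (hC : C < 0) (hφ : 0 < φ) (hγ0 : 0 < γ) (hγ1 : γ < 1)
    (hφα' : 0 ≤ φα') (hφβ' : 0 ≤ φβ') :
    let A₁ : Matrix (Fin 2) (Fin 2) ℝ :=
      !![-(φ * (φ - γ * φα')), 0; γ * φ * φβ', -(φ ^ 2)]
    Module.End.HasEigenvalue (Matrix.toLin' A₁) (-(φ * (φ - γ * φα'))) ∧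
    Module.End.HasEigenvalue (Matrix.toLin' A₁) (-(φ ^ 2)) ∧
    (0 < φ - γ * φα' →
      (-(φ * (φ - γ * φα')) < 0 ∧ -(φ ^ 2) < (0 : ℝ)) ∧
      Matrix.mulVec A₁ ![C / (φ - γ * φα'),
        C / φ + C * γ * φβ' / (φ * (φ - γ * φα'))] + ![φ * C, φ * C] = 0) ∧
    (φ - γ * φα' < 0 →
      ∃ e : ℝ, 0 < e ∧ Module.End.HasEigenvalue (Matrix.toLin' A₁) e) :=
  pi1_branch_eigenvalues_and_stability_general C γ φ φα' φβ' hφ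
end

section
/- With φα = φβ = φ > 0, γ ∈ (0,1), φα', φβ' ≥ 0, the matrix A₂ = [[−φ², γφφα'], [0, −φ(φ−γφβ')]] has eigenvalues −φ² and −φ(φ−γφβ'). Hence if Dβ = φ − γφβ' < 0, A₂ has a positive eigenvalue, so the π₂ Bellman solution θ_{π₂} (the zero of F^{π₂}_semi) is an unstable equilibrium of the flow θ' = A₂θ + b restricted to the region θ₁ ≤ θ₂. -/
/-! A₂ is upper triangular, so its eigenvalues are its diagonal entries, and the zero of
θ ↦ A₂θ + b is found by back-substitution. -/

open Matrix Module.End Polynomial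

theorem Matrix.hasEigenvalue_toLin'_of_isUpperTriangular {R n : Type*} [CommRing R] [IsDomain R]
    [Fintype n] [DecidableEq n] [LinearOrder n] {M : Matrix n n R} (hM : M.IsUpperTriangular)
    (i : n) : HasEigenvalue M.toLin' (M i i) := by
  rw [hasEigenvalue_iff_isRoot_charpoly, charpoly_toLin',
    charpoly_of_isUpperTriangular M hM, IsRoot, eval_prod]
  exact Finset.prod_eq_zero (Finset.mem_univ i) (by simp)

theorem Matrix.isUpperTriangular_of_fin_two {R : Type*} [Zero R] (a b d : R) :
    (!![a, b; 0, d] : Matrix (Fin 2) (Fin 2) R).IsUpperTriangular := by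
  intro i j hji
  fin_cases i <;> fin_cases j <;> simp_all

theorem Matrix.mulVec_add_eq_zero_of_fin_two_upperTriangular {K : Type*} [Field K]
    {a b d u v x y : K} (ha : a ≠ 0) (hd : d ≠ 0) (hy : y = -v / d) (hx : x = -(u + b * y) / a) :
    !![a, b; 0, d] *ᵥ ![x, y] + ![u, v] = 0 := by
  have h₂ : y * d + v = 0 := by rw [hy]; field_simp; ring
  have h₁ : x * a + y * b + u = 0 := by rw [hx]; field_simp; ring
  ext i
  fin_cases i <;> simp [h₁, h₂]

theorem pi2_branch_eigenvalues_and_instability_general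
    (C γ φ φα' φβ' : ℝ)
    (hφ : 0 < φ) :
    let A₂ : Matrix (Fin 2) (Fin 2) ℝ :=
      !![-(φ ^ 2), γ * φ * φα'; 0, -(φ * (φ - γ * φβ'))]
    Module.End.HasEigenvalue (Matrix.toLin' A₂) (-(φ ^ 2)) ∧
    Module.End.HasEigenvalue (Matrix.toLin' A₂) (-(φ * (φ - γ * φβ'))) ∧
    (φ - γ * φβ' < 0 →
      0 < -(φ * (φ - γ * φβ')) ∧
      Matrix.mulVec A₂ ![C / φ + C * γ * φα' / (φ * (φ - γ * φβ')),
        C / (φ - γ * φβ')] + ![φ * C, φ * C] = 0) := by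
  intro A₂
  have hA₂ : A₂.IsUpperTriangular := Matrix.isUpperTriangular_of_fin_two _ _ _
  refine ⟨Matrix.hasEigenvalue_toLin'_of_isUpperTriangular hA₂ 0,
    Matrix.hasEigenvalue_toLin'_of_isUpperTriangular hA₂ 1, fun hD => ⟨?_, ?_⟩⟩
  · exact neg_pos.mpr (mul_neg_of_pos_of_neg hφ hD)
  · apply Matrix.mulVec_add_eq_zero_of_fin_two_upperTriangular
      (neg_ne_zero.mpr (pow_ne_zero 2 hφ.ne'))
      (neg_ne_zero.mpr (mul_ne_zero hφ.ne' hD.ne))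
    · field_simp
    · field_simp

theorem pi2_branch_eigenvalues_and_instability
    (C γ φ φα' φβ' : ℝ)
    (hC : C < 0) (hφ : 0 < φ) (hγ0 : 0 < γ) (hγ1 : γ < 1)
    (hφα' : 0 ≤ φα') (hφβ' : 0 ≤ φβ') :
    let A₂ : Matrix (Fin 2) (Fin 2) ℝ :=
      !![-(φ ^ 2), γ * φ * φα'; 0, -(φ * (φ - γ * φβ'))]
    Module.End.HasEigenvalue (Matrix.toLin' A₂) (-(φ ^ 2)) ∧
    Module.End.HasEigenvalue (Matrix.toLin' A₂) (-(φ * (φ - γ * φβ'))) ∧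
    (φ - γ * φβ' < 0 →
      0 < -(φ * (φ - γ * φβ')) ∧
      Matrix.mulVec A₂ ![C / φ + C * γ * φα' / (φ * (φ - γ * φβ')),
        C / (φ - γ * φβ')] + ![φ * C, φ * C] = 0) :=
  pi2_branch_eigenvalues_and_instability_general C γ φ φα' φβ' hφ
end
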